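/- arXiv:1210.2443 — 6 statements merged into one kernel-verified Lean document; each statement's English description precedes it below -/
import Mathlib

section
/- Let b > 0, γ > 0, and for a continuous drift b^R : ℝ → ℝ with antiderivative-based scale function u_R(x) = ∫_{z₀}^x exp(−∫_{z₀}^y 2 b^R(r) dr) dy, suppose b^R ≥ 0 on ℝ. Then the function H(s) = c·u_R'(s−γ) / (u_R(s−γ) + c·u_R'(s−γ)), where c = (1 − exp(−2bγ))/(2b) > 0, is non-increasing on (z₀ + γ, ∞). -/
open Real intervalIntegral MeasureTheory Set

/-!
Since `b^R ≥ 0`, the derivative `u_R' = exp (-∫ 2 b^R)` of the scale function is positive and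
non-increasing, while `u_R` is non-decreasing and positive to the right of `z₀`. Hence
`u_R / u_R'` is non-decreasing there, so `H(s) = c / (u_R / u_R' + c)` (the ratio taken at
`s - γ`) is non-increasing, because `c ≥ 0`.
-/

lemma monotone_primitive_of_nonneg {f : ℝ → ℝ} (a : ℝ)
    (hf : ∀ x y, IntervalIntegrable f volume x y) (hf0 : ∀ x, 0 ≤ f x) :
    Monotone fun x => ∫ r in a..x, f r := by
  intro x y hxy
  have hsplit := integral_add_adjacent_intervals (hf a x) (hf x y)
  have hnn : 0 ≤ ∫ r in x..y, f r := integral_nonneg hxy fun r _ => hf0 r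
  linarith

lemma one_sub_exp_neg_mul_div_nonneg (a : ℝ) {t : ℝ} (ht : 0 ≤ t) :
    0 ≤ (1 - exp (-(a * t))) / a := by
  rcases le_total a 0 with ha | ha
  · have : 1 ≤ exp (-(a * t)) := one_le_exp (by nlinarith)
    exact div_nonneg_of_nonpos (by linarith) ha
  · have : exp (-(a * t)) ≤ 1 := exp_le_one_iff.2 (by nlinarith)
    exact div_nonneg (by linarith) ha

lemma antitoneOn_mul_div_add_mul {s : Set ℝ} {p q : ℝ → ℝ} {c : ℝ} (hc : 0 ≤ c)
    (hp : AntitoneOn p s) (hq : MonotoneOn q s)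
    (hp0 : ∀ x ∈ s, 0 < p x) (hq0 : ∀ x ∈ s, 0 < q x) :
    AntitoneOn (fun x => c * p x / (q x + c * p x)) s := by
  intro x hx y hy hxy
  have hden : ∀ z ∈ s, 0 < q z + c * p z := fun z hz =>
    add_pos_of_pos_of_nonneg (hq0 z hz) (mul_nonneg hc (hp0 z hz).le)
  have key : p y * q x ≤ p x * q y :=
    mul_le_mul (hp hx hy hxy) (hq hx hy hxy) (hq0 x hx).le (hp0 x hx).le
  rw [div_le_div_iff₀ (hden y hy) (hden x hx)]
  nlinarith [mul_le_mul_of_nonneg_left key hc]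

theorem stmt_1_general (b γ z₀ : ℝ) (hγ : 0 < γ)
    (bR : ℝ → ℝ) (hbRcont : Continuous bR) (hbRnonneg : ∀ x, 0 ≤ bR x)
    (uR uR' H : ℝ → ℝ)
    (huR' : ∀ x, uR' x = Real.exp (-(∫ r in z₀..x, 2 * bR r)))
    (huR : ∀ x, uR x = ∫ y in z₀..x, uR' y)
    (c : ℝ) (hc : c = (1 - Real.exp (-(2 * b * γ))) / (2 * b))
    (hH : ∀ s, H s = c * uR' (s - γ) / (uR (s - γ) + c * uR' (s - γ))) :
    AntitoneOn H (Set.Ioi (z₀ + γ)) := by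
  have hbR : ∀ x y, IntervalIntegrable (fun r => 2 * bR r) volume x y := fun x y =>
    (continuous_const.mul hbRcont).intervalIntegrable x y
  have huR'_anti : Antitone uR' := fun x y hxy => by
    rw [huR', huR']
    exact exp_le_exp.2 <| neg_le_neg <|
      monotone_primitive_of_nonneg z₀ hbR (fun r => by linarith [hbRnonneg r]) hxy
  have huR'_pos : ∀ x, 0 < uR' x := fun x => huR' x ▸ exp_pos _
  have huR_mono : Monotone uR := funext huR ▸
    monotone_primitive_of_nonneg z₀ (fun _ _ => huR'_anti.intervalIntegrable)
      (fun x => (huR'_pos x).le)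
  have huR_pos : ∀ x ∈ Ioi z₀, 0 < uR x := fun x hx => huR x ▸
    intervalIntegral_pos_of_pos_on huR'_anti.intervalIntegrable (fun r _ => huR'_pos r) hx
  have hG := antitoneOn_mul_div_add_mul (hc ▸ one_sub_exp_neg_mul_div_nonneg (2 * b) hγ.le)
    (huR'_anti.antitoneOn _) (huR_mono.monotoneOn _) (fun x _ => huR'_pos x) huR_pos
  intro s₁ hs₁ s₂ hs₂ h12
  rw [hH, hH]
  exact hG (mem_Ioi.2 (lt_sub_iff_add_lt.2 hs₁)) (mem_Ioi.2 (lt_sub_iff_add_lt.2 hs₂))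
    (by linarith)

/-- If the recurrent drift `b^R` is nonnegative, then the function
`H(s) = c u_R'(s−γ) / (u_R(s−γ) + c u_R'(s−γ))`, with `c = (1 − e^{−2bγ})/(2b)`,
is non-increasing on `(z₀ + γ, ∞)`. -/
theorem stmt_1 (b γ z₀ : ℝ) (hb : 0 < b) (hγ : 0 < γ)
    (bR : ℝ → ℝ) (hbRcont : Continuous bR) (hbRnonneg : ∀ x, 0 ≤ bR x)
    (uR uR' H : ℝ → ℝ)
    (huR' : ∀ x, uR' x = Real.exp (-(∫ r in z₀..x, 2 * bR r)))
    (huR : ∀ x, uR x = ∫ y in z₀..x, uR' y)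
    (c : ℝ) (hc : c = (1 - Real.exp (-(2 * b * γ))) / (2 * b))
    (hH : ∀ s, H s = c * uR' (s - γ) / (uR (s - γ) + c * uR' (s - γ))) :
    AntitoneOn H (Set.Ioi (z₀ + γ)) :=
  stmt_1_general b γ z₀ hγ bR hbRcont hbRnonneg uR uR' H huR' huR c hc hH
end

section
/- Let u : ℝ → ℝ be C¹ with u > 0 and u' > 0 on [z₀, ∞), with u' non-increasing and lim_{x→∞} u(x) = ∞, and let c > 0. Then for any d > 0, the series ∑_{n=1}^∞ c·u'(d·n) / (u(d·n) + c·u'(d·n)) diverges. -/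
/-!
Write `aₙ = u(d(n+1))` and `xₙ = c u'(d(n+1))`. Since `u'` is non-increasing, `u` lies
below its tangent lines, so `aₙ₊₁ - aₙ ≤ d u'(d(n+1))` and the increments of `log aₙ` are
at most `(d / c) xₙ / aₙ`. These increments telescope to `log aₙ → ∞`, hence `∑ xₙ / aₙ`
diverges. Finally, if `∑ xₙ / (aₙ + xₙ)` converged, its terms would eventually be at most
`1/2`, i.e. `xₙ ≤ aₙ`, and then `xₙ / aₙ ≤ 2 xₙ / (aₙ + xₙ)` would make `∑ xₙ / aₙ` converge.
-/

open Filter Set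

lemma sub_le_deriv_mul_sub_of_antitoneOn_deriv {u : ℝ → ℝ} {z₀ x y : ℝ}
    (hu : Differentiable ℝ u) (hanti : AntitoneOn (deriv u) (Ici z₀))
    (hx : z₀ ≤ x) (hxy : x ≤ y) : u y - u x ≤ deriv u x * (y - x) :=
  (convex_Ici x).image_sub_le_mul_sub_of_deriv_le hu.continuous.continuousOn
    hu.differentiableOn
    (fun _ hz => hanti hx (hx.trans (interior_subset hz : _ ≤ _)) (interior_subset hz))
    x self_mem_Ici y hxy hxy

lemma monotoneOn_Ici_of_deriv_pos {u : ℝ → ℝ} {z₀ : ℝ} (hu : Differentiable ℝ u)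
    (hpos : ∀ x ∈ Ici z₀, 0 < deriv u x) : MonotoneOn u (Ici z₀) :=
  monotoneOn_of_deriv_nonneg (convex_Ici z₀) hu.continuous.continuousOn hu.differentiableOn
    fun x hx => (hpos x (interior_subset hx)).le

lemma log_sub_log_le_sub_div {a b : ℝ} (ha : 0 < a) (hab : a ≤ b) :
    Real.log b - Real.log a ≤ (b - a) / a := by
  rw [← Real.log_div (ha.trans_le hab).ne' ha.ne']
  calc Real.log (b / a) ≤ b / a - 1 := Real.log_le_sub_one_of_pos (div_pos (ha.trans_le hab) ha)
    _ = (b - a) / a := by field_simp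

lemma not_summable_div_of_sub_le_mul {a x : ℕ → ℝ} (K : ℝ) (ha : Tendsto a atTop atTop)
    (hstep : ∀ᶠ n in atTop, 0 < a n ∧ a n ≤ a (n + 1) ∧ a (n + 1) - a n ≤ K * x n) :
    ¬ Summable fun n => x n / a n := by
  intro hsum
  have hlog : Summable fun n => Real.log (a (n + 1)) - Real.log (a n) := by
    refine (hsum.mul_left K).of_norm_bounded_eventually_nat ?_
    filter_upwards [hstep] with n ⟨hpos, hmono, hinc⟩
    rw [Real.norm_of_nonneg (sub_nonneg.2 (Real.log_le_log hpos hmono))]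
    calc Real.log (a (n + 1)) - Real.log (a n) ≤ (a (n + 1) - a n) / a n :=
          log_sub_log_le_sub_div hpos hmono
      _ ≤ K * x n / a n := by gcongr
      _ = K * (x n / a n) := mul_div_assoc _ _ _
  have htel : Tendsto
      (fun M => ∑ n ∈ Finset.range M, (Real.log (a (n + 1)) - Real.log (a n))) atTop atTop := by
    simp only [Finset.sum_range_sub (fun n => Real.log (a n))]
    exact tendsto_atTop_add_const_right _ _ (Real.tendsto_log_atTop.comp ha)
  exact not_tendsto_nhds_of_tendsto_atTop htel _ hlog.hasSum.tendsto_sum_nat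

lemma summable_div_of_summable_div_add {a x : ℕ → ℝ}
    (hpos : ∀ᶠ n in atTop, 0 < a n ∧ 0 ≤ x n) (hsum : Summable fun n => x n / (a n + x n)) : Summable fun n => x n / a n := by
  refine (hsum.mul_left 2).of_norm_bounded_eventually_nat ?_
  have hsmall : ∀ᶠ n in atTop, x n / (a n + x n) ≤ 1 / 2 :=
    hsum.tendsto_atTop_zero.eventually (ge_mem_nhds one_half_pos)
  filter_upwards [hpos, hsmall] with n ⟨ha, hx⟩ hn
  have hxa : x n ≤ a n := by
    rw [div_le_iff₀ (by positivity)] at hn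
    linarith
  rw [Real.norm_of_nonneg (by positivity), ← mul_div_assoc, div_le_div_iff₀ ha (by positivity)]
  nlinarith

/-- If `u` is `C¹`, positive, strictly increasing with non-increasing derivative on
`[z₀,∞)` and `u(x) → ∞`, then `∑ₙ c u'(dn)/(u(dn) + c u'(dn))` diverges. -/
theorem stmt_2 (z₀ c d : ℝ) (hc : 0 < c) (hd : 0 < d)
    (u : ℝ → ℝ) (hu : ContDiff ℝ 1 u)
    (hupos : ∀ x ∈ Set.Ici z₀, 0 < u x)
    (hu'pos : ∀ x ∈ Set.Ici z₀, 0 < deriv u x)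
    (hu'anti : AntitoneOn (deriv u) (Set.Ici z₀))
    (hinf : Filter.Tendsto u Filter.atTop Filter.atTop) :
    ¬ Summable (fun n : ℕ =>
      c * deriv u (d * (n + 1)) / (u (d * (n + 1)) + c * deriv u (d * (n + 1)))) := by
  intro hsum
  have hdiff : Differentiable ℝ u := hu.differentiable one_ne_zero
  have hgrid : Tendsto (fun n : ℕ => d * (n + 1)) atTop atTop :=
    (tendsto_atTop_add_const_right _ 1 tendsto_natCast_atTop_atTop).const_mul_atTop hd
  have hfar : ∀ᶠ n : ℕ in atTop, z₀ ≤ d * (n + 1) := hgrid.eventually_ge_atTop z₀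
  refine not_summable_div_of_sub_le_mul (d / c) (hinf.comp hgrid) ?_
    (summable_div_of_summable_div_add ?_ hsum)
  · filter_upwards [hfar] with n hn
    have hnext : d * ((n + 1 : ℕ) + 1 : ℝ) = d * (n + 1) + d := by push_cast; ring
    simp only [Function.comp_apply, hnext]
    refine ⟨hupos _ hn, monotoneOn_Ici_of_deriv_pos hdiff hu'pos hn (hn.trans (by linarith))
      (by linarith), ?_⟩
    calc u (d * (n + 1) + d) - u (d * (n + 1))
        ≤ deriv u (d * (n + 1)) * (d * (n + 1) + d - d * (n + 1)) :=
          sub_le_deriv_mul_sub_of_antitoneOn_deriv hdiff hu'anti hn (by linarith)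
      _ = d / c * (c * deriv u (d * (n + 1))) := by field_simp; ring
  · filter_upwards [hfar] with n hn
    exact ⟨hupos _ hn, mul_nonneg hc.le (hu'pos _ hn).le⟩
end

section
/- Let λ > 0 and let S_n be the sum of n i.i.d. exponential random variables with rate λ (so S_n has density λⁿ x^{n−1} e^{−λx}/(n−1)! on x ≥ 0). Let I_j = [j, j + 1/j²] for j ≥ 2, and let A = ⋃_{j≥2} I_j. Then there exists a constant C > 0 such that for all n ≥ 3, P(S_n ∈ A) ≤ C/n². -/
/-!
On `I_j = [j, j + 1/j²]` we write `x^{n-1} = x² · x^{n-3}`. The factor `x²` is at most `4j²`, which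
cancels against the length `1/j²` of `I_j`, and `x^{n-3} e^{-λx}` is at most `e^{2λ}` times its
value at any point of the unit window `[j+1, j+2)`: the power only grows and the exponential loses
at most `e^{-2λ}`. So the mass of `I_j` is at most `4 e^{2λ}` times the integral of
`x^{n-3} e^{-λx}` over the window. The windows are disjoint, so the total is at most
`4 e^{2λ} Γ(n-2) / λ^{n-2}`, and multiplying by `λⁿ / (n-1)!` gives `4 e^{2λ} λ² / ((n-1)(n-2))`.
-/

open Real MeasureTheory Set Nat
open scoped ENNReal

lemma lintegral_Ioi_pow_mul_exp_neg_mul {l : ℝ} (hl : 0 < l) (k : ℕ) :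
    ∫⁻ x in Ioi 0, ENNReal.ofReal (x ^ k * exp (-(l * x))) =
      ENNReal.ofReal (k ! / l ^ (k + 1)) := by
  have hGamma : ∫ x in Ioi 0, x ^ k * exp (-(l * x)) = k ! / l ^ (k + 1) := by
    have h := integral_rpow_mul_exp_neg_mul_Ioi (a := k + 1) (by positivity) hl
    rw [Gamma_nat_eq_factorial, add_sub_cancel_right, ← Nat.cast_succ] at h
    simpa only [rpow_natCast, one_div, inv_pow, inv_mul_eq_div] using h
  rw [← ofReal_integral_eq_lintegral_ofReal, hGamma]
  · exact Integrable.of_integral_ne_zero (by rw [hGamma]; positivity)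
  · filter_upwards [ae_restrict_mem measurableSet_Ioi] with x hx
    exact mul_nonneg (pow_nonneg (le_of_lt hx) _) (exp_pos _).le

lemma setLIntegral_mul_measure_le_of_forall_le {α : Type*} [MeasurableSpace α] {μ : Measure α}
    {s t : Set α} {f g : α → ℝ≥0∞} (hg : Measurable g) (hfg : ∀ x ∈ s, ∀ y ∈ t, f x ≤ g y) :
    (∫⁻ x in s, f x ∂μ) * μ t ≤ μ s * ∫⁻ y in t, g y ∂μ := by
  set c := ⨅ y ∈ t, g y
  have hf : ∫⁻ x in s, f x ∂μ ≤ c * μ s := by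
    rw [← setLIntegral_const]
    exact setLIntegral_mono measurable_const fun x hx => le_iInf₂ (hfg x hx)
  have hg : c * μ t ≤ ∫⁻ y in t, g y ∂μ := by
    rw [← setLIntegral_const]
    exact setLIntegral_mono hg fun y hy => iInf₂_le y hy
  calc (∫⁻ x in s, f x ∂μ) * μ t ≤ c * μ s * μ t := by gcongr
    _ = μ s * (c * μ t) := by ring
    _ ≤ μ s * ∫⁻ y in t, g y ∂μ := by gcongr

lemma pow_mul_exp_neg_mul_le_of_mem_Icc_of_mem_Ico {l m x y : ℝ} (k : ℕ) (hl : 0 ≤ l)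
    (hm : 1 ≤ m) (hx : x ∈ Icc m (m + 1 / m ^ 2)) (hy : y ∈ Ico (m + 1) (m + 2)) :
    x ^ (k + 2) * exp (-(l * x)) ≤ 4 * exp (2 * l) * m ^ 2 * (y ^ k * exp (-(l * y))) := by
  obtain ⟨hmx, hxu⟩ := hx
  obtain ⟨hmy, hym⟩ := hy
  have hxm : x ≤ m + 1 := by
    have : 1 / m ^ 2 ≤ 1 := by rw [div_le_one (by positivity)]; nlinarith
    linarith
  have hx0 : 0 ≤ x := by linarith
  have hy0 : 0 ≤ y := by linarith
  have hx2 : x ^ 2 ≤ 4 * m ^ 2 := by nlinarith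
  have hxy : x ^ k ≤ y ^ k := by gcongr; linarith
  have hexp : exp (-(l * x)) ≤ exp (2 * l) * exp (-(l * y)) := by
    rw [← exp_add, exp_le_exp]
    nlinarith
  calc x ^ (k + 2) * exp (-(l * x)) = x ^ 2 * x ^ k * exp (-(l * x)) := by ring
    _ ≤ 4 * m ^ 2 * y ^ k * (exp (2 * l) * exp (-(l * y))) := by gcongr
    _ = 4 * exp (2 * l) * m ^ 2 * (y ^ k * exp (-(l * y))) := by ring

lemma setLIntegral_Icc_pow_mul_exp_neg_mul_le {l m : ℝ} (k : ℕ) (hl : 0 ≤ l) (hm : 1 ≤ m) :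
    ∫⁻ x in Icc m (m + 1 / m ^ 2), ENNReal.ofReal (x ^ (k + 2) * exp (-(l * x))) ≤
      ENNReal.ofReal (4 * exp (2 * l)) *
        ∫⁻ y in Ico (m + 1) (m + 2), ENNReal.ofReal (y ^ k * exp (-(l * y))) := by
  have h := setLIntegral_mul_measure_le_of_forall_le (μ := volume) (by fun_prop)
    fun x hx y hy => ENNReal.ofReal_le_ofReal
      (pow_mul_exp_neg_mul_le_of_mem_Icc_of_mem_Ico k hl hm hx hy)
  rw [Real.volume_Ico, Real.volume_Icc, add_sub_cancel_left,
    show m + 2 - (m + 1) = 1 by ring, ENNReal.ofReal_one, mul_one] at h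
  refine h.trans_eq ?_
  simp_rw [ENNReal.ofReal_mul (by positivity : (0 : ℝ) ≤ 4 * exp (2 * l) * m ^ 2)]
  rw [lintegral_const_mul _ (by fun_prop), ← mul_assoc, ← ENNReal.ofReal_mul (by positivity)]
  congr 2
  field_simp

lemma lintegral_iUnion_Icc_inv_sq_pow_mul_exp_neg_mul_le {l : ℝ} (hl : 0 < l) (k : ℕ) :
    ∫⁻ x in ⋃ j : ℕ, ⋃ (_ : 2 ≤ j), Icc (j : ℝ) (j + 1 / (j : ℝ) ^ 2),
        ENNReal.ofReal (x ^ (k + 2) * exp (-(l * x))) ≤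
      ENNReal.ofReal (4 * exp (2 * l) * (k ! / l ^ (k + 1))) := by
  set w : ℝ → ℝ≥0∞ := fun y => ENNReal.ofReal (y ^ k * exp (-(l * y)))
  have hdisj : Pairwise (Function.onFun Disjoint fun j : ℕ => Ico ((j : ℝ) + 1) (j + 2)) := by
    have := (pairwise_disjoint_Ico_add_intCast (1 : ℝ)).comp_of_injective Nat.cast_injective
    convert this using 3 with j
    push_cast
    congr 1 <;> ring
  have hsub : ⋃ j : ℕ, Ico ((j : ℝ) + 1) (j + 2) ⊆ Ioi 0 :=
    iUnion_subset fun j y hy => lt_of_lt_of_le (by positivity) hy.1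
  calc _ ≤ ∑' j : ℕ, ∫⁻ x in ⋃ (_ : 2 ≤ j), Icc (j : ℝ) (j + 1 / (j : ℝ) ^ 2),
          ENNReal.ofReal (x ^ (k + 2) * exp (-(l * x))) := lintegral_iUnion_le _ _
    _ ≤ ∑' j : ℕ, ENNReal.ofReal (4 * exp (2 * l)) * ∫⁻ y in Ico ((j : ℝ) + 1) (j + 2), w y := by
        refine ENNReal.tsum_le_tsum fun j => ?_
        by_cases hj : 2 ≤ j
        · simp only [hj, iUnion_true]
          exact setLIntegral_Icc_pow_mul_exp_neg_mul_le k hl.le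
            (by exact_mod_cast one_le_two.trans hj)
        · simp [hj]
    _ = ENNReal.ofReal (4 * exp (2 * l)) * ∫⁻ y in ⋃ j : ℕ, Ico ((j : ℝ) + 1) (j + 2), w y := by
        rw [ENNReal.tsum_mul_left, lintegral_iUnion (fun _ => measurableSet_Ico) hdisj]
    _ ≤ ENNReal.ofReal (4 * exp (2 * l)) * ∫⁻ y in Ioi 0, w y := by gcongr
    _ = _ := by rw [lintegral_Ioi_pow_mul_exp_neg_mul hl, ← ENNReal.ofReal_mul (by positivity)]

lemma lintegral_iUnion_Icc_inv_sq_gammaDensity_le {l : ℝ} (hl : 0 < l) (k : ℕ) :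
    ∫⁻ x in ⋃ j : ℕ, ⋃ (_ : 2 ≤ j), Icc (j : ℝ) (j + 1 / (j : ℝ) ^ 2),
        ENNReal.ofReal (l ^ (k + 3) * x ^ (k + 2) * exp (-(l * x)) / (k + 2)!) ≤
      ENNReal.ofReal (18 * exp (2 * l) * l ^ 2 / (k + 3) ^ 2) := by
  have hfact : ((k + 2)! : ℝ) = (k + 1) * (k + 2) * k ! := by
    push_cast [Nat.factorial_succ]; ring
  have hconst : l ^ (k + 3) / (k + 2)! * (4 * exp (2 * l) * (k ! / l ^ (k + 1))) ≤
      18 * exp (2 * l) * l ^ 2 / (k + 3) ^ 2 := by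
    have hsimp : l ^ (k + 3) / (k + 2)! * (4 * exp (2 * l) * (k ! / l ^ (k + 1))) =
        4 * exp (2 * l) * l ^ 2 / ((k + 1) * (k + 2)) := by
      rw [hfact, pow_add l (k + 1) 2]
      field_simp
    have hk : (4 : ℝ) * (k + 3) ^ 2 ≤ 18 * ((k + 1) * (k + 2)) := by nlinarith
    rw [hsimp, div_le_div_iff₀ (by positivity) (by positivity)]
    nlinarith [mul_le_mul_of_nonneg_left hk (by positivity : 0 ≤ exp (2 * l) * l ^ 2)]
  simp_rw [mul_assoc (l ^ (k + 3)), mul_div_right_comm (l ^ (k + 3)),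
    ENNReal.ofReal_mul (by positivity : 0 ≤ l ^ (k + 3) / (k + 2)!)]
  rw [lintegral_const_mul _ (by fun_prop)]
  calc _ ≤ ENNReal.ofReal (l ^ (k + 3) / (k + 2)!) *
          ENNReal.ofReal (4 * exp (2 * l) * (k ! / l ^ (k + 1))) := by
        gcongr
        exact lintegral_iUnion_Icc_inv_sq_pow_mul_exp_neg_mul_le hl k
    _ ≤ _ := by
        rw [← ENNReal.ofReal_mul (by positivity)]
        exact ENNReal.ofReal_le_ofReal hconst

/-- If `S_n` is a sum of `n` i.i.d. exponential random variables of rate `λ` (with the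
Gamma density `λⁿ x^{n−1} e^{−λx}/(n−1)!`), and `A = ⋃_{j≥2} [j, j + 1/j²]`, then
`P(S_n ∈ A) ≤ C/n²` for some constant `C` and all `n ≥ 3`. -/
theorem stmt_3 (l : ℝ) (hl : 0 < l) :
    ∃ C > 0, ∀ n : ℕ, 3 ≤ n →
      (∫ x in (⋃ j : ℕ, ⋃ (_ : 2 ≤ j), Set.Icc (j : ℝ) (j + 1 / (j : ℝ) ^ 2)),
        l ^ n * x ^ (n - 1) * Real.exp (-(l * x)) / (Nat.factorial (n - 1) : ℝ)) ≤ C / n ^ 2 := by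
  refine ⟨18 * exp (2 * l) * l ^ 2, by positivity, fun n hn => ?_⟩
  obtain ⟨k, rfl⟩ : ∃ k, n = k + 3 := ⟨n - 3, by omega⟩
  rw [show k + 3 - 1 = k + 2 from rfl]
  have hnonneg : ∀ x ∈ ⋃ j : ℕ, ⋃ (_ : 2 ≤ j), Icc (j : ℝ) (j + 1 / (j : ℝ) ^ 2),
      0 ≤ l ^ (k + 3) * x ^ (k + 2) * exp (-(l * x)) / (k + 2)! := by
    intro x hx
    obtain ⟨j, -, hj⟩ := mem_iUnion₂.1 hx
    have : 0 ≤ x := (Nat.cast_nonneg j).trans hj.1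
    positivity
  rw [integral_eq_lintegral_of_nonneg_ae
    ((ae_restrict_iff' (by measurability)).2 (ae_of_all _ hnonneg)) (by fun_prop)]
  push_cast
  exact ENNReal.toReal_le_of_le_ofReal (by positivity)
    (lintegral_iUnion_Icc_inv_sq_gammaDensity_le hl k)
end

section
/- Let γ > 0, k ≥ 1, and b^T(x) = (1/(2γ))·log log x + (k/(2γ))·log log log x for x ≥ z₀ (z₀ large). Define u_T(x) = ∫_{z₀}^x exp(−∫_{z₀}^y 2 b^T(r) dr) dy. Then there exist constants C₃, C₄ > 0 such that for all sufficiently large x: C₃/((log x)·(log log x)^{k−1}) ≤ u_T'(x)/(u_T(x) − u_T(x−γ)) ≤ C₄/((log x)·(log log x)^{k−1}). -/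
/-!
Write `φ(x) = log log x + k log log log x`, so that `2bᵀ = φ / γ`. Since `u_T' = exp (-∫ 2bᵀ)`,
the difference `u_T(x) - u_T(x - γ)` equals `u_T'(x) · ∫_{x-γ}^x exp (∫_y^x 2bᵀ) dy`, and the ratio
is the reciprocal of that integral. For large `x` the drift is increasing, so the integrand lies
between `exp (m (x - y))` and `exp (M (x - y))` with `m = 2bᵀ(x - γ)`, `M = 2bᵀ(x)`. Both integrate
to `≍ log x (log log x)^(k-1)`: `exp (γ M) = log x (log log x)^k` with `γ M ≍ log log x`, and
`exp (γ m) ≥ 2^(-k-1) exp (γ M)` because `log (x - γ) ≥ log x / 2` and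
`log log (x - γ) ≥ log log x / 2`.

The integral `∫_{z₀}^y 2bᵀ` starts at an arbitrary `z₀`, so the iterated logarithms must be
integrable across their singularities. They are, because `|log t| ≤ |t| + 2 |t|^(-1/2)` and
singularities of type `|h - c|^(-1/2)` are preserved by `h ↦ log ∘ h`.
-/

open Real MeasureTheory Set Filter intervalIntegral

theorem intervalIntegrable_abs_rpow {s : ℝ} (hs : -1 < s) (a b : ℝ) :
    IntervalIntegrable (fun x : ℝ => |x| ^ s) volume a b := by
  have hpos : ∀ t, 0 ≤ t → IntervalIntegrable (fun x : ℝ => |x| ^ s) volume 0 t := fun t ht =>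
    (intervalIntegrable_rpow' hs).congr fun x hx => by
      rw [uIoc_of_le ht] at hx
      rw [abs_of_pos hx.1]
  have hzero : ∀ t, IntervalIntegrable (fun x : ℝ => |x| ^ s) volume 0 t := by
    intro t
    rcases le_total 0 t with ht | ht
    · exact hpos t ht
    · simpa using ((IntervalIntegrable.iff_comp_neg (by simp)).1 (hpos (-t) (by linarith)))
  exact (hzero a).symm.trans (hzero b)

theorem intervalIntegrable_abs_sub_rpow {s : ℝ} (hs : -1 < s) (c a b : ℝ) :
    IntervalIntegrable (fun x : ℝ => |x - c| ^ s) volume a b := by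
  simpa using (intervalIntegrable_abs_rpow hs (a - c) (b - c)).comp_sub_right c

theorem abs_log_le_abs_add_rpow (t : ℝ) : |log t| ≤ |t| + 2 * |t| ^ (-(1/2) : ℝ) := by
  rw [← log_abs]
  have ht := abs_nonneg t
  rcases le_total 0 (log |t|) with hlog | hlog
  · have hle := log_le_rpow_div ht one_pos
    rw [rpow_one, div_one] at hle
    rw [abs_of_nonneg hlog]
    linarith [rpow_nonneg ht (-(1/2) : ℝ)]
  · have hle := log_le_rpow_div (inv_nonneg.2 ht) (by norm_num : (0 : ℝ) < 1/2)
    rw [log_inv, inv_rpow ht, ← rpow_neg ht] at hle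
    rw [abs_of_nonpos hlog]
    linarith

theorem min_le_abs_log {t : ℝ} (ht : 0 < t) : min (1/4) (|t - 1| / 4) ≤ |log t| := by
  rcases lt_or_ge t 1 with h1 | h1
  · rw [abs_of_neg (log_neg ht h1), abs_of_neg (by linarith)]
    exact (min_le_right _ _).trans (by linarith [log_le_sub_one_of_pos ht])
  · have hinv : 1 - t⁻¹ ≤ log t := by
      linarith [log_le_sub_one_of_pos (inv_pos.2 ht), log_inv t]
    rw [abs_of_nonneg (log_nonneg h1), abs_of_nonneg (by linarith)]
    rcases le_total t 2 with h2 | h2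
    · refine (min_le_right _ _).trans (hinv.trans' ?_)
      rw [show 1 - t⁻¹ = (t - 1) / t by field_simp]
      exact div_le_div_of_nonneg_left (by linarith) ht (by linarith)
    · refine (min_le_left _ _).trans (hinv.trans' ?_)
      linarith [inv_anti₀ (by norm_num : (0 : ℝ) < 2) h2]

theorem abs_log_rpow_le (v : ℝ) :
    |log v| ^ (-(1/2) : ℝ) ≤ 2 + 2 * |(|v| - 1)| ^ (-(1/2) : ℝ) := by
  rcases eq_or_ne (log v) 0 with h0 | h0
  · rw [h0, abs_zero, zero_rpow (by norm_num)]
    positivity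
  have hv : 0 < |v| := abs_pos.2 (by rintro rfl; simp at h0)
  have hv1 : 0 < |(|v| - 1)| :=
    abs_pos.2 (sub_ne_zero.2 fun h => h0 (by rw [← log_abs, h, log_one]))
  have hmin := min_le_abs_log hv
  rw [log_abs] at hmin
  refine (rpow_le_rpow_of_nonpos (by positivity) hmin (by norm_num)).trans ?_
  rcases min_choice (1/4 : ℝ) (|(|v| - 1)| / 4) with h | h <;> rw [h]
  · norm_num
    positivity
  · rw [div_rpow hv1.le (by norm_num)]
    norm_num
    linarith

theorem abs_abs_sub_rpow_le (u a : ℝ) {s : ℝ} :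
    |(|u| - a)| ^ s ≤ |u - a| ^ s + |u + a| ^ s := by
  rcases le_total 0 u with hu | hu
  · rw [abs_of_nonneg hu]
    linarith [rpow_nonneg (abs_nonneg (u + a)) s]
  · rw [abs_of_nonpos hu, show -u - a = -(u + a) by ring, abs_neg]
    linarith [rpow_nonneg (abs_nonneg (u - a)) s]

/-- The term `|c| ^ (-1/2)` accounts for `u = 0`, where `log 0 = 0`. -/
theorem abs_log_sub_rpow_le (u c : ℝ) :
    |log u - c| ^ (-(1/2) : ℝ) ≤
      |c| ^ (-(1/2) : ℝ) + 2 + 2 * exp (c / 2) *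
        (|u - exp c| ^ (-(1/2) : ℝ) + |u + exp c| ^ (-(1/2) : ℝ)) := by
  rcases eq_or_ne u 0 with rfl | hu
  · rw [log_zero, zero_sub, abs_neg]
    have h : 0 ≤ 2 * exp (c / 2) * (|0 - exp c| ^ (-(1/2) : ℝ) + |0 + exp c| ^ (-(1/2) : ℝ)) := by
      positivity
    linarith
  have hscale : log u - c = log (u * exp (-c)) := by
    rw [log_mul hu (exp_pos _).ne', log_exp, sub_eq_add_neg]
  have habs : |(|u * exp (-c)| - 1)| = exp (-c) * |(|u| - exp c)| := by
    rw [abs_mul, abs_of_pos (exp_pos _),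
      show |u| * exp (-c) - 1 = exp (-c) * (|u| - exp c) by rw [exp_neg]; field_simp,
      abs_mul, abs_of_pos (exp_pos _)]
  have hpow : (exp (-c) * |(|u| - exp c)|) ^ (-(1/2) : ℝ) =
      exp (c / 2) * |(|u| - exp c)| ^ (-(1/2) : ℝ) := by
    rw [mul_rpow (exp_pos _).le (abs_nonneg _), ← exp_mul]
    ring_nf
  have hlog := abs_log_rpow_le (u * exp (-c))
  rw [← hscale, habs, hpow] at hlog
  have hsplit := abs_abs_sub_rpow_le u (exp c) (s := (-(1/2) : ℝ))
  have hc : 0 ≤ |c| ^ (-(1/2) : ℝ) := by positivity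
  nlinarith [exp_pos (c / 2)]

structure MildlySingular (h : ℝ → ℝ) : Prop where
  measurable : Measurable h
  intervalIntegrable : ∀ a b, IntervalIntegrable h volume a b
  intervalIntegrable_rpow : ∀ c a b,
    IntervalIntegrable (fun x => |h x - c| ^ (-(1/2) : ℝ)) volume a b

theorem mildlySingular_id : MildlySingular id where
  measurable := measurable_id
  intervalIntegrable := fun a b => continuous_id.intervalIntegrable a b
  intervalIntegrable_rpow := intervalIntegrable_abs_sub_rpow (by norm_num)

theorem MildlySingular.log {h : ℝ → ℝ} (hh : MildlySingular h) :
    MildlySingular fun x => log (h x) where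
  measurable := measurable_log.comp hh.measurable
  intervalIntegrable a b := by
    refine IntervalIntegrable.mono_fun' (g := fun x => |h x| + 2 * |h x - 0| ^ (-(1/2) : ℝ))
      ((hh.intervalIntegrable a b).abs.add ((hh.intervalIntegrable_rpow 0 a b).const_mul 2))
      (measurable_log.comp hh.measurable).aestronglyMeasurable (ae_of_all _ fun x => ?_)
    simpa only [norm_eq_abs, sub_zero] using abs_log_le_abs_add_rpow (h x)
  intervalIntegrable_rpow c a b := by
    refine IntervalIntegrable.mono_fun' (g := fun x => |c| ^ (-(1/2) : ℝ) + 2 + 2 * exp (c / 2) *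
        (|h x - exp c| ^ (-(1/2) : ℝ) + |h x - -exp c| ^ (-(1/2) : ℝ)))
      (intervalIntegrable_const.add (((hh.intervalIntegrable_rpow _ a b).add
        (hh.intervalIntegrable_rpow _ a b)).const_mul _))
      (((measurable_log.comp hh.measurable).sub_const c).abs.pow_const _).aestronglyMeasurable
      (ae_of_all _ fun x => ?_)
    simpa only [norm_eq_abs, abs_of_nonneg (rpow_nonneg (abs_nonneg _) _), sub_neg_eq_add]
      using abs_log_sub_rpow_le (h x) c

theorem integral_exp_mul_sub {c : ℝ} (hc : c ≠ 0) (a b : ℝ) :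
    ∫ y in a..b, exp (c * (b - y)) = (exp (c * (b - a)) - 1) / c := by
  rw [integral_comp_sub_left (fun t => exp (c * t)), integral_comp_mul_left _ hc, integral_exp]
  simp only [sub_self, mul_zero, exp_zero, smul_eq_mul]
  field_simp

section HazardRatio

variable {f : ℝ → ℝ} (hf : ∀ a b, IntervalIntegrable f volume a b)
include hf

theorem continuous_integral_left (b : ℝ) : Continuous fun y => ∫ r in y..b, f r :=
  (continuous_primitive hf b).neg.congr fun y => (integral_symm b y).symm

theorem deriv_div_sub_eq_inv_integral {u : ℝ → ℝ} {z₀ : ℝ}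
    (hu : ∀ x, u x = ∫ y in z₀..x, exp (-∫ r in z₀..y, f r)) (x γ : ℝ) :
    deriv u x / (u x - u (x - γ)) = (∫ y in x - γ..x, exp (∫ r in y..x, f r))⁻¹ := by
  set g : ℝ → ℝ := fun y => exp (-∫ r in z₀..y, f r)
  have hg : Continuous g := continuous_exp.comp (continuous_primitive hf z₀).neg
  have hsplit : ∀ y, g y = g x * exp (∫ r in y..x, f r) := fun y => by
    simp only [g, ← exp_add]
    congr 1
    linarith [integral_add_adjacent_intervals (hf z₀ y) (hf y x)]
  rw [funext hu, hg.deriv_integral, integral_interval_sub_left (hg.intervalIntegrable _ _)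
    (hg.intervalIntegrable _ _), integral_congr fun y _ => hsplit y,
    intervalIntegral.integral_const_mul,
    div_mul_cancel_left₀ (exp_pos _).ne']

theorem integral_exp_integral_le {a b M : ℝ} (hab : a ≤ b) (hM : M ≠ 0)
    (hfM : ∀ r ∈ Icc a b, f r ≤ M) :
    ∫ y in a..b, exp (∫ r in y..b, f r) ≤ (exp (M * (b - a)) - 1) / M := by
  rw [← integral_exp_mul_sub hM]
  refine integral_mono_on hab
    ((continuous_exp.comp (continuous_integral_left hf b)).intervalIntegrable _ _)
    ((by fun_prop : Continuous _).intervalIntegrable _ _) fun y hy => exp_le_exp.2 ?_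
  have hint := integral_mono_on hy.2 (hf y b) intervalIntegrable_const
    fun r hr => hfM r ⟨hy.1.trans hr.1, hr.2⟩
  simpa [intervalIntegral.integral_const, mul_comm] using hint

theorem le_integral_exp_integral {a b m : ℝ} (hab : a ≤ b) (hm : m ≠ 0)
    (hfm : ∀ r ∈ Icc a b, m ≤ f r) :
    (exp (m * (b - a)) - 1) / m ≤ ∫ y in a..b, exp (∫ r in y..b, f r) := by
  rw [← integral_exp_mul_sub hm]
  refine integral_mono_on hab ((by fun_prop : Continuous _).intervalIntegrable _ _)
    ((continuous_exp.comp (continuous_integral_left hf b)).intervalIntegrable _ _)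
    fun y hy => exp_le_exp.2 ?_
  have hint := integral_mono_on hy.2 intervalIntegrable_const (hf y b)
    fun r hr => hfm r ⟨hy.1.trans hr.1, hr.2⟩
  simpa [intervalIntegral.integral_const, mul_comm] using hint

theorem inv_integral_exp_integral_mem {a b m M : ℝ} (hab : a < b) (hm : 0 < m)
    (hf_mem : ∀ r ∈ Icc a b, m ≤ f r ∧ f r ≤ M) :
    M / (exp (M * (b - a)) - 1) ≤ (∫ y in a..b, exp (∫ r in y..b, f r))⁻¹ ∧
      (∫ y in a..b, exp (∫ r in y..b, f r))⁻¹ ≤ m / (exp (m * (b - a)) - 1) := by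
  have hM : 0 < M := hm.trans_le ((hf_mem a ⟨le_rfl, hab.le⟩).1.trans (hf_mem a ⟨le_rfl, hab.le⟩).2)
  have hpos : ∀ c, 0 < c → 0 < (exp (c * (b - a)) - 1) / c := fun c hc =>
    div_pos (by simpa using mul_pos hc (sub_pos.2 hab)) hc
  have hlow := le_integral_exp_integral hf hab.le hm.ne' fun r hr => (hf_mem r hr).1
  have hupp := integral_exp_integral_le hf hab.le hM.ne' fun r hr => (hf_mem r hr).2
  constructor
  · simpa only [inv_div] using inv_anti₀ ((hpos m hm).trans_le hlow) hupp
  · simpa only [inv_div] using inv_anti₀ (hpos m hm) hlow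

end HazardRatio

/-- `γ · 2bᵀ(x)`. -/
noncomputable def scaledDrift (k x : ℝ) : ℝ := log (log x) + k * log (log (log x))

theorem intervalIntegrable_scaledDrift (k a b : ℝ) :
    IntervalIntegrable (scaledDrift k) volume a b :=
  (mildlySingular_id.log.log.intervalIntegrable a b).add
    ((mildlySingular_id.log.log.log.intervalIntegrable a b).const_mul k)

theorem exp_scaledDrift (k : ℝ) {x : ℝ} (hx : 1 < log x) :
    exp (scaledDrift k x) = log x * log (log x) ^ k := by
  have hL2 : 0 < log (log x) := log_pos hx
  rw [scaledDrift, exp_add, exp_log (by linarith), rpow_def_of_pos hL2, mul_comm k]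

theorem monotoneOn_scaledDrift {k : ℝ} (hk : 0 ≤ k) : MonotoneOn (scaledDrift k) (Ioi (exp 1)) := by
  intro x hx y hy hxy
  have hx0 : 0 < x := (exp_pos 1).trans hx
  have hlog : 1 < log x := (lt_log_iff_exp_lt hx0).2 hx
  have hL2 : 0 < log (log x) := log_pos hlog
  unfold scaledDrift
  gcongr

theorem log_le_two_mul_log {x y : ℝ} (hx : 4 ≤ x) (hy : x / 2 ≤ y) : log x ≤ 2 * log y := by
  rw [← log_rpow (by linarith) 2]
  refine log_le_log (by linarith) ?_
  rw [rpow_two]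
  nlinarith

theorem eventually_mul_log_le (k : ℝ) : ∀ᶠ t in atTop, k * log t ≤ t := by
  filter_upwards [(isLittleO_log_id_atTop.const_mul_left k).bound one_pos,
    eventually_ge_atTop 0] with t ht ht0
  simp only [norm_eq_abs, id, one_mul, abs_of_nonneg ht0] at ht
  exact (le_abs_self _).trans ht

theorem eventually_log_comparable (k γ : ℝ) : ∀ᶠ x in atTop,
    exp (exp 1) ≤ x - γ ∧ log x ≤ 2 * log (x - γ) ∧
      log (log x) ≤ 2 * log (log (x - γ)) ∧ k * log (log (log x)) ≤ log (log x) := by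
  filter_upwards [eventually_ge_atTop (2 * γ), eventually_ge_atTop (2 * exp (exp 1)),
    tendsto_log_atTop.eventually_ge_atTop 6,
    (tendsto_log_atTop.comp tendsto_log_atTop).eventually (eventually_mul_log_le k)]
    with x hxγ hxe hlog hk
  have hx4 : 4 ≤ x := by linarith [add_one_le_exp (exp 1), add_one_le_exp 1]
  have hlog' : log x ≤ 2 * log (x - γ) := log_le_two_mul_log hx4 (by linarith)
  exact ⟨by linarith, hlog', log_le_two_mul_log (by linarith) (by linarith), hk⟩

theorem exp_one_lt_of_exp_exp_one_le {x : ℝ} (hx : exp (exp 1) ≤ x) : exp 1 < x :=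
  (exp_lt_exp.2 (by linarith [add_one_le_exp 1])).trans_le hx

theorem one_lt_log_and_one_le_loglog {x : ℝ} (hx : exp (exp 1) ≤ x) :
    1 < log x ∧ 1 ≤ log (log x) := by
  have hlog : exp 1 ≤ log x := (le_log_iff_exp_le ((exp_pos _).trans_le hx)).2 hx
  exact ⟨(one_lt_exp_iff.2 one_pos).trans_le hlog,
    (le_log_iff_exp_le ((exp_pos 1).trans_le hlog)).2 hlog⟩

theorem loglog_le_scaledDrift {k x : ℝ} (hk : 0 ≤ k) (hx : 1 ≤ log (log x)) :
    log (log x) ≤ scaledDrift k x :=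
  le_add_of_nonneg_right (mul_nonneg hk (log_nonneg hx))

theorem one_le_scaledDrift {k x : ℝ} (hk : 0 ≤ k) (hx : exp (exp 1) ≤ x) :
    1 ≤ scaledDrift k x :=
  (one_lt_log_and_one_le_loglog hx).2.trans
    (loglog_le_scaledDrift hk (one_lt_log_and_one_le_loglog hx).2)

theorem inv_div_le_scaledDrift_div {γ k x : ℝ} (hγ : 0 < γ) (hk : 0 ≤ k)
    (hx : exp (exp 1) ≤ x) :
    γ⁻¹ / (log x * log (log x) ^ (k - 1)) ≤
      scaledDrift k x / γ / (exp (scaledDrift k x) - 1) := by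
  obtain ⟨hlog, hL2⟩ := one_lt_log_and_one_le_loglog hx
  have hφ := loglog_le_scaledDrift hk hL2
  calc γ⁻¹ / (log x * log (log x) ^ (k - 1))
      = log (log x) / γ / exp (scaledDrift k x) := by
        rw [exp_scaledDrift k hlog,
          rpow_sub_one (zero_lt_one.trans_le hL2).ne']
        field_simp
    _ ≤ scaledDrift k x / γ / exp (scaledDrift k x) := by gcongr
    _ ≤ scaledDrift k x / γ / (exp (scaledDrift k x) - 1) :=
        div_le_div_of_nonneg_left (div_nonneg (by linarith) hγ.le)
          (by linarith [add_one_le_exp (scaledDrift k x)]) (by linarith)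

theorem scaledDrift_div_le {γ k x y : ℝ} (hγ : 0 < γ) (hk : 0 ≤ k) (hy : exp (exp 1) ≤ y)
    (hyx : y ≤ x) (hlog : log x ≤ 2 * log y) (hL2 : log (log x) ≤ 2 * log (log y))
    (hL3 : k * log (log (log x)) ≤ log (log x)) :
    scaledDrift k y / γ / (exp (scaledDrift k y) - 1) ≤
      2 ^ (k + 3) / γ / (log x * log (log x) ^ (k - 1)) := by
  obtain ⟨hlogy, hL2y⟩ := one_lt_log_and_one_le_loglog hy
  have hlogx : 1 < log x := hlogy.trans_le (log_le_log ((exp_pos _).trans_le hy) hyx)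
  have hlogx0 : 0 < log x := by linarith
  have hL2x : 0 < log (log x) := log_pos hlogx
  have hφy := one_le_scaledDrift hk hy
  have hey := exp_one_lt_of_exp_exp_one_le hy
  have hφ : scaledDrift k y ≤ 2 * log (log x) :=
    (monotoneOn_scaledDrift hk hey (hey.trans_le hyx) hyx).trans (by unfold scaledDrift; linarith)
  have hexp : log x * log (log x) ^ k / 2 ^ k ≤ 2 * exp (scaledDrift k y) := by
    rw [exp_scaledDrift k hlogy, mul_div_assoc,
      ← div_rpow hL2x.le zero_le_two, ← mul_assoc]
    exact mul_le_mul hlog (rpow_le_rpow (by positivity) (by linarith) hk) (by positivity)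
      (by linarith)
  calc scaledDrift k y / γ / (exp (scaledDrift k y) - 1)
      ≤ 2 * log (log x) / γ / (log x * log (log x) ^ k / 2 ^ k / 4) := by
        refine div_le_div₀ (by positivity) (by gcongr) (by positivity) ?_
        linarith [add_one_le_exp (scaledDrift k y)]
    _ = 2 ^ (k + 3) / γ / (log x * log (log x) ^ (k - 1)) := by
        rw [rpow_sub_one hL2x.ne', rpow_add two_pos]
        norm_num
        field_simp
        norm_num

/-- Two-sided estimate for the hazard rate `u_T'(x)/(u_T(x) − u_T(x−γ))` when
`b^T(x) = (1/(2γ)) log log x + (k/(2γ)) log log log x`. -/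
theorem stmt_5 (γ k z₀ : ℝ) (hγ : 0 < γ) (hk : 1 ≤ k)
    (bT : ℝ → ℝ)
    (hbT : ∀ x, bT x = (1 / (2 * γ)) * Real.log (Real.log x)
      + (k / (2 * γ)) * Real.log (Real.log (Real.log x)))
    (uT : ℝ → ℝ)
    (huT : ∀ x, uT x = ∫ y in z₀..x, Real.exp (-(∫ r in z₀..y, 2 * bT r))) :
    ∃ C₃ > 0, ∃ C₄ > 0, ∃ x₀ : ℝ, ∀ x ≥ x₀,
      C₃ / (Real.log x * (Real.log (Real.log x)) ^ (k - 1))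
        ≤ deriv uT x / (uT x - uT (x - γ))
      ∧ deriv uT x / (uT x - uT (x - γ))
        ≤ C₄ / (Real.log x * (Real.log (Real.log x)) ^ (k - 1)) := by
  have hk0 : 0 ≤ k := zero_le_one.trans hk
  have h2bT : ∀ r, 2 * bT r = scaledDrift k r / γ := fun r => by
    rw [hbT, scaledDrift]
    field_simp
  have hf : ∀ a b, IntervalIntegrable (fun r => scaledDrift k r / γ) volume a b :=
    fun a b => (intervalIntegrable_scaledDrift k a b).div_const γ
  refine ⟨γ⁻¹, inv_pos.2 hγ, 2 ^ (k + 3) / γ, by positivity, ?_⟩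
  obtain ⟨x₀, hx₀⟩ := eventually_atTop.1 (eventually_log_comparable k γ)
  refine ⟨x₀, fun x hx => ?_⟩
  obtain ⟨hxγ, hlog, hL2, hL3⟩ := hx₀ x hx
  have hsub : Icc (x - γ) x ⊆ Ioi (exp 1) :=
    (Icc_subset_Ioi_iff (by linarith)).2 (exp_one_lt_of_exp_exp_one_le hxγ)
  have hmono : MonotoneOn (fun r => scaledDrift k r / γ) (Icc (x - γ) x) := fun r hr s hs hrs =>
    div_le_div_of_nonneg_right (monotoneOn_scaledDrift hk0 (hsub hr) (hsub hs) hrs) hγ.le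
  have hbounds := inv_integral_exp_integral_mem hf (a := x - γ) (b := x) (by linarith)
    (div_pos (by linarith [one_le_scaledDrift hk0 hxγ]) hγ)
    fun r hr => ⟨hmono (left_mem_Icc.2 (hr.1.trans hr.2)) hr hr.1,
      hmono hr (right_mem_Icc.2 (hr.1.trans hr.2)) hr.2⟩
  rw [sub_sub_cancel, div_mul_cancel₀ _ hγ.ne', div_mul_cancel₀ _ hγ.ne'] at hbounds
  rw [deriv_div_sub_eq_inv_integral (by simpa only [h2bT] using hf) huT]
  simp only [h2bT]
  exact ⟨(inv_div_le_scaledDrift_div hγ hk0 (hxγ.trans (by linarith))).trans hbounds.1,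
    hbounds.2.trans (scaledDrift_div_le hγ hk0 hxγ (by linarith) hlog hL2 hL3)⟩
end

section
/- Let C₃, M > 0 and suppose a sequence (x_n)_{n≥1} of positive reals with partial sums s_n = x₀ + ∑_{j=1}^n x_j (x₀ > e fixed, large) satisfies C₃·x_n / log s_n = 2·log(n + M) for all n ≥ 1. Then there exists C > 0 such that s_n ≤ C·(n + M)·(log(n + M))² for all n ≥ 1. -/
/-!
Write the recurrence as `s (n+1) ≤ s n + c log(n+1+M) log s (n+1)`. Since `log y ≤ 2 √y`, the
square root `√(s n)` grows by at most `2 c log(n+M)` per step, so `s n` is bounded by a polynomial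
in `n + M` and `log (s n) = O(log (n+M))`. Feeding this back, each increment is
`O(log (n+M) ^ 2)`, and summing the increments gives the bound.
-/

open Real Finset

namespace Real

lemma log_le_two_mul_sqrt {y : ℝ} (hy : 0 ≤ y) : log y ≤ 2 * √y := by
  have h := log_le_rpow_div hy (by norm_num : (0 : ℝ) < 1 / 2)
  rwa [← sqrt_eq_rpow, div_eq_mul_inv, one_div, inv_inv, mul_comm] at h

lemma le_sqrt_add_of_sq_le_add_mul {s t a : ℝ} (hs : 0 ≤ s) (ha : 0 ≤ a)
    (h : t ^ 2 ≤ s + a * t) : t ≤ √s + a := by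
  by_contra! hlt
  have hsq := sq_sqrt hs
  nlinarith [sqrt_nonneg s]

lemma sqrt_le_sqrt_add_of_le_add_mul_log {s s' b : ℝ} (hs : 0 ≤ s) (hs' : 0 ≤ s') (hb : 0 ≤ b)
    (h : s' ≤ s + b * log s') : √s' ≤ √s + 2 * b := by
  refine le_sqrt_add_of_sq_le_add_mul hs (by positivity) ?_
  rw [sq_sqrt hs', mul_assoc, mul_left_comm]
  exact h.trans (add_le_add_right (mul_le_mul_of_nonneg_left (log_le_two_mul_sqrt hs') hb) s)

lemma log_le_mul_log_of_le_mul_pow {y B z z₀ : ℝ} {k : ℕ} (hz₀ : 1 < z₀) (hz : z₀ ≤ z)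
    (hy : 0 < y) (h : y ≤ B * z ^ k) : log y ≤ (|log B| / log z₀ + k) * log z := by
  have hzpos : 0 < z := by linarith
  have hB : 0 < B := pos_of_mul_pos_left (hy.trans_le h) (by positivity)
  have hlogz₀ : 0 < log z₀ := log_pos hz₀
  have hlogB : |log B| ≤ |log B| / log z₀ * log z := by
    rw [div_mul_eq_mul_div, le_div_iff₀ hlogz₀]
    exact mul_le_mul_of_nonneg_left (log_le_log (by linarith) hz) (abs_nonneg _)
  calc log y ≤ log (B * z ^ k) := log_le_log hy h
    _ = log B + k * log z := by rw [log_mul hB.ne' (by positivity), log_pow]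
    _ ≤ (|log B| / log z₀ + k) * log z := by linarith [le_abs_self (log B)]

end Real

lemma le_add_mul_of_le_add {u d : ℕ → ℝ} (hd : ∀ n, 1 ≤ n → d n ≤ d (n + 1))
    (h : ∀ n, u (n + 1) ≤ u n + d (n + 1)) (n : ℕ) : u n ≤ u 0 + n * d n := by
  induction n with
  | zero => simp
  | succ n ih =>
    have hstep : n * d n ≤ n * d (n + 1) := by
      rcases Nat.eq_zero_or_pos n with rfl | hn
      · simp
      · exact mul_le_mul_of_nonneg_left (hd n hn) n.cast_nonneg
    push_cast
    linarith [h n]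

section LogRecurrence

variable {c M : ℝ} {s : ℕ → ℝ}

lemma sqrt_le_of_le_add_mul_log (hc : 0 < c) (hM : 0 < M) (hs : ∀ n, 0 < s n)
    (hrec : ∀ n : ℕ, s (n + 1) ≤ s n + c * log (n + 1 + M) * log (s (n + 1))) (n : ℕ) :
    √(s n) ≤ √(s 0) + n * (2 * (c * log (n + M))) := by
  refine le_add_mul_of_le_add (u := fun n ↦ √(s n)) (d := fun n ↦ 2 * (c * log (n + M)))
    (fun n hn ↦ ?_) (fun n ↦ ?_) n
  · have hn' : (1 : ℝ) ≤ n := by exact_mod_cast hn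
    push_cast
    gcongr
    linarith
  · have hlog : 0 ≤ log (n + 1 + M) := log_nonneg (by linarith [n.cast_nonneg (α := ℝ)])
    push_cast
    exact sqrt_le_sqrt_add_of_le_add_mul_log (hs n).le (hs (n + 1)).le
      (mul_nonneg hc.le hlog) (hrec n)

lemma le_mul_pow_of_le_add_mul_log (hc : 0 < c) (hM : 0 < M) (hs : ∀ n, 0 < s n)
    (hrec : ∀ n : ℕ, s (n + 1) ≤ s n + c * log (n + 1 + M) * log (s (n + 1)))
    {n : ℕ} (hn : 1 ≤ n) : s n ≤ (√(s 0) + 2 * c) ^ 2 * (n + M) ^ 4 := by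
  set z : ℝ := n + M
  have hnz : (n : ℝ) ≤ z := by simp [z, hM.le]
  have hz : 1 ≤ z := by linarith [show (1 : ℝ) ≤ n by exact_mod_cast hn]
  have hlogz : log z ≤ z := (log_le_sub_one_of_pos (by linarith)).trans (by linarith)
  have hsqrt : √(s n) ≤ (√(s 0) + 2 * c) * z ^ 2 :=
    calc √(s n) ≤ √(s 0) + n * (2 * (c * log z)) := sqrt_le_of_le_add_mul_log hc hM hs hrec n
      _ = √(s 0) + 2 * c * (n * log z) := by ring
      _ ≤ √(s 0) * z ^ 2 + 2 * c * (z * z) := by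
        have hlogz₀ : 0 ≤ log z := log_nonneg hz
        gcongr
        exact le_mul_of_one_le_right (sqrt_nonneg _) (one_le_pow₀ hz)
      _ = (√(s 0) + 2 * c) * z ^ 2 := by ring
  calc s n = √(s n) ^ 2 := (sq_sqrt (hs n).le).symm
    _ ≤ ((√(s 0) + 2 * c) * z ^ 2) ^ 2 := by gcongr
    _ = (√(s 0) + 2 * c) ^ 2 * z ^ 4 := by ring

lemma exists_log_le_mul_log_of_le_add_mul_log (hc : 0 < c) (hM : 0 < M) (hs : ∀ n, 0 < s n)
    (hrec : ∀ n : ℕ, s (n + 1) ≤ s n + c * log (n + 1 + M) * log (s (n + 1))) :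
    ∃ K > 0, ∀ n : ℕ, 1 ≤ n → log (s n) ≤ K * log (n + M) := by
  have hlogM : 0 < log (1 + M) := log_pos (by linarith)
  refine ⟨|log ((√(s 0) + 2 * c) ^ 2)| / log (1 + M) + (4 : ℕ), by positivity, fun n hn ↦ ?_⟩
  have hn' : (1 : ℝ) ≤ n := by exact_mod_cast hn
  exact log_le_mul_log_of_le_mul_pow (by linarith) (by linarith) (hs n)
    (le_mul_pow_of_le_add_mul_log hc hM hs hrec hn)

theorem exists_le_mul_log_sq_of_le_add_mul_log (hc : 0 < c) (hM : 0 < M) (hs : ∀ n, 0 < s n)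
    (hrec : ∀ n : ℕ, s (n + 1) ≤ s n + c * log (n + 1 + M) * log (s (n + 1))) :
    ∃ C > 0, ∀ n : ℕ, 1 ≤ n → s n ≤ C * (n + M) * log (n + M) ^ 2 := by
  obtain ⟨K, hK, hlog⟩ := exists_log_le_mul_log_of_le_add_mul_log hc hM hs hrec
  have hlogM : 0 < log (1 + M) := log_pos (by linarith)
  have hsum (n : ℕ) : s n ≤ s 0 + n * (c * K * log (n + M) ^ 2) := by
    refine le_add_mul_of_le_add (d := fun n ↦ c * K * log (n + M) ^ 2)
      (fun n hn ↦ ?_) (fun n ↦ ?_) n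
    · have hn' : (1 : ℝ) ≤ n := by exact_mod_cast hn
      push_cast
      gcongr
      · exact log_nonneg (by linarith)
      · linarith
    · have hlog₀ : 0 ≤ log (n + 1 + M) := log_nonneg (by linarith [n.cast_nonneg (α := ℝ)])
      calc s (n + 1) ≤ s n + c * log (n + 1 + M) * log (s (n + 1)) := hrec n
        _ ≤ s n + c * log (n + 1 + M) * (K * log (n + 1 + M)) := by
          gcongr
          simpa using hlog (n + 1) (by omega)
        _ = s n + c * K * log (↑(n + 1) + M) ^ 2 := by push_cast; ring
  refine ⟨s 0 / ((1 + M) * log (1 + M) ^ 2) + c * K, by positivity [hs 0], fun n hn ↦ ?_⟩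
  have hn' : (1 : ℝ) ≤ n := by exact_mod_cast hn
  have hlogn : log (1 + M) ≤ log (n + M) := log_le_log (by linarith) (by linarith)
  have hbase : (1 + M) * log (1 + M) ^ 2 ≤ (n + M) * log (n + M) ^ 2 := by gcongr
  have hs0 : s 0 ≤ s 0 / ((1 + M) * log (1 + M) ^ 2) * ((n + M) * log (n + M) ^ 2) := by
    rw [div_mul_eq_mul_div, le_div_iff₀ (by positivity)]
    exact mul_le_mul_of_nonneg_left hbase (hs 0).le
  calc s n ≤ s 0 + n * (c * K * log (n + M) ^ 2) := hsum n
    _ ≤ s 0 / ((1 + M) * log (1 + M) ^ 2) * ((n + M) * log (n + M) ^ 2)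
        + (n + M) * (c * K * log (n + M) ^ 2) := by gcongr; linarith
    _ = (s 0 / ((1 + M) * log (1 + M) ^ 2) + c * K) * (n + M) * log (n + M) ^ 2 := by ring

end LogRecurrence

/-- Growth upper bound for the difference equation `C₃ xₙ / log sₙ = 2 log(n + M)`:
the partial sums satisfy `sₙ ≤ C (n+M) (log(n+M))²`. -/
theorem stmt_6 (C₃ M : ℝ) (hC₃ : 0 < C₃) (hM : 0 < M)
    (x : ℕ → ℝ) (hx0 : Real.exp 1 < x 0) (hxpos : ∀ n, 1 ≤ n → 0 < x n)
    (s : ℕ → ℝ) (hs : ∀ n, s n = x 0 + ∑ j ∈ Finset.Icc 1 n, x j)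
    (hrec : ∀ n : ℕ, 1 ≤ n → C₃ * x n / Real.log (s n) = 2 * Real.log (n + M)) :
    ∃ C > 0, ∀ n : ℕ, 1 ≤ n → s n ≤ C * (n + M) * (Real.log (n + M)) ^ 2 := by
  have hs_succ (n : ℕ) : s (n + 1) = s n + x (n + 1) := by
    rw [hs, hs, sum_Icc_succ_top (by omega)]
    ring
  have hs_gt_one (n : ℕ) : 1 < s n := by
    have hsum : 0 ≤ ∑ j ∈ Icc 1 n, x j := sum_nonneg fun j hj ↦ (hxpos j (mem_Icc.mp hj).1).le
    linarith [hs n, one_lt_exp_iff.mpr one_pos]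
  have hx (n : ℕ) (hn : 1 ≤ n) : x n = 2 / C₃ * log (n + M) * log (s n) := by
    have h := hrec n hn
    field_simp [(log_pos (hs_gt_one n)).ne'] at h ⊢
    linarith
  refine exists_le_mul_log_sq_of_le_add_mul_log (div_pos two_pos hC₃) hM
    (fun n ↦ one_pos.trans (hs_gt_one n)) fun n ↦ (hs_succ n).trans_le ?_
  rw [hx (n + 1) (by omega)]
  push_cast
  rfl
end

section
/- Let C₄ > 0, k > 1, and suppose a sequence (x_n)_{n≥0} of positive reals with x₀ > e and partial sums s_n = ∑_{j=0}^n x_j satisfies x_{n+1} = (log s_n)·(log log s_n)^{k−1} / C₄ for all n ≥ 0. Then there exists C > 0 such that s_n ≥ C·n·(log n)·(log log n)^{k−1} for all n ≥ 3. -/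
/-!
The increments `x (n + 1) = L (s n) / C₄`, where `L t = log t * (log log t) ^ (k - 1)` is increasing
on `[e, ∞)`, are nondecreasing. Hence `s` grows at least linearly, so `s (n / 2) ≥ √n` eventually,
and the last `n - n / 2` increments give `s n ≥ (n / 2) L (√n) / C₄ ≥ n L n / (2 ^ (k + 1) C₄)`:
halving `log t` costs at most a factor `2` in `log log t` once `log t ≥ 4`.
Finitely many indices only affect the constant.
-/

open Real Finset Filter Asymptotics

noncomputable def logLogRate (k t : ℝ) : ℝ := log t * log (log t) ^ (k - 1)

theorem logLogRate_nonneg {k t : ℝ} (ht : exp 1 ≤ t) : 0 ≤ logLogRate k t := by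
  have hlog : 1 ≤ log t := (le_log_iff_exp_le ((exp_pos 1).trans_le ht)).2 ht
  exact mul_nonneg (by linarith) (rpow_nonneg (log_nonneg hlog) _)

theorem logLogRate_monotoneOn {k : ℝ} (hk : 1 ≤ k) :
    MonotoneOn (logLogRate k) (Set.Ici (exp 1)) := by
  intro s hs t _ hst
  have hs0 : 0 < s := (exp_pos 1).trans_le hs
  have hlogs : 1 ≤ log s := (le_log_iff_exp_le hs0).2 hs
  have hlog : log s ≤ log t := log_le_log hs0 hst
  have hloglog : log (log s) ≤ log (log t) := log_le_log (by linarith) hlog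
  have hloglog0 : 0 ≤ log (log s) := log_nonneg hlogs
  exact mul_le_mul hlog (rpow_le_rpow hloglog0 hloglog (by linarith))
    (rpow_nonneg hloglog0 _) (by linarith)

theorem logLogRate_le_two_rpow_mul_logLogRate_sqrt {k t : ℝ} (hk : 1 ≤ k) (ht : 0 ≤ t)
    (hlog : 4 ≤ log t) : logLogRate k t ≤ 2 ^ k * logLogRate k √t := by
  have hloglog4 : log 4 ≤ log (log t) := log_le_log (by norm_num) hlog
  have hlog4 : log 4 = 2 * log 2 := by
    rw [show (4 : ℝ) = 2 ^ 2 by norm_num, log_pow]; push_cast; ring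
  have hloglog0 : 0 ≤ log (log t) := by linarith [log_pos (by norm_num : (1 : ℝ) < 2)]
  have hloglog_half : log (log t) / 2 ≤ log (log t / 2) := by
    rw [log_div (by positivity) two_ne_zero]
    linarith
  calc logLogRate k t = log t * (2 * (log (log t) / 2)) ^ (k - 1) := by
        rw [logLogRate, mul_div_cancel₀ _ two_ne_zero]
    _ = 2 ^ k * (log t / 2 * (log (log t) / 2) ^ (k - 1)) := by
        rw [mul_rpow zero_le_two (by positivity), rpow_sub_one (x := 2) two_ne_zero]
        ring
    _ ≤ 2 ^ k * logLogRate k √t := by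
      rw [logLogRate, log_sqrt ht]
      gcongr

theorem eventually_sqrt_le_mul_half {b : ℝ} (hb : 0 < b) :
    ∀ᶠ n : ℕ in atTop, √(n : ℝ) ≤ (n / 2 : ℕ) * b := by
  filter_upwards [eventually_ge_atTop 2,
    tendsto_natCast_atTop_atTop.eventually_ge_atTop (9 / b ^ 2)] with n hn2 hn
  have h3 : (n : ℝ) ≤ 3 * (n / 2 : ℕ) := by exact_mod_cast (by omega : n ≤ 3 * (n / 2))
  have h9 : 9 ≤ n * b ^ 2 := by rwa [div_le_iff₀ (by positivity)] at hn
  have hy : n * b / 3 ≤ (n / 2 : ℕ) * b := by nlinarith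
  rw [sqrt_le_left (by positivity)]
  calc (n : ℝ) ≤ n * (n * b ^ 2) / 9 := by nlinarith
    _ = (n * b / 3) ^ 2 := by ring
    _ ≤ _ := by gcongr

theorem exists_pos_mul_le_of_isBigO {f g : ℕ → ℝ} (hf : ∀ n, 0 < f n) (h : g =O[atTop] f) :
    ∃ C > 0, ∀ n, C * g n ≤ f n := by
  obtain ⟨C, hC, hbound⟩ := bound_of_isBigO_nat_atTop h
  refine ⟨C⁻¹, inv_pos.2 hC, fun n => ?_⟩
  have := hbound (hf n).ne'
  rw [norm_eq_abs, norm_eq_abs, abs_of_pos (hf n)] at this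
  rw [inv_mul_le_iff₀ hC]
  exact (le_abs_self _).trans this

section Recurrence

variable {x s : ℕ → ℝ}

theorem monotone_of_eq_sum_range (hs : ∀ n, s n = ∑ j ∈ range (n + 1), x j)
    (hx : ∀ n, 0 ≤ x n) : Monotone s :=
  monotone_nat_of_le_succ fun n => by
    rw [hs, hs, sum_range_succ _ (n + 1)]
    linarith [hx (n + 1)]

theorem add_mul_le_of_eq_sum_range (hs : ∀ n, s n = ∑ j ∈ range (n + 1), x j)
    (hx : Monotone fun n => x (n + 1)) (m d : ℕ) : s m + d * x (m + 1) ≤ s (m + d) := by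
  rw [hs, hs, show m + d + 1 = m + 1 + d by ring, sum_range_add x (m + 1) d]
  gcongr
  simpa using card_nsmul_le_sum (range d) (fun i => x (m + 1 + i)) (x (m + 1))
    fun i _ => by simpa [add_right_comm] using hx (Nat.le_add_right m i)

theorem eventually_mul_logLogRate_le_of_recurrence {C₄ k : ℝ} (hC₄ : 0 < C₄) (hk : 1 ≤ k)
    (hx0 : exp 1 ≤ x 0) (hxpos : ∀ n, 0 < x n) (hs : ∀ n, s n = ∑ j ∈ range (n + 1), x j)
    (hrec : ∀ n, x (n + 1) = logLogRate k (s n) / C₄) :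
    ∀ᶠ n : ℕ in atTop, n * logLogRate k n ≤ 2 ^ (k + 1) * C₄ * s n := by
  have hsmono := monotone_of_eq_sum_range hs fun n => (hxpos n).le
  have hse (n : ℕ) : exp 1 ≤ s n := by
    have := hsmono (Nat.zero_le n)
    rw [hs 0, sum_range_one] at this
    linarith
  have hxmono : Monotone fun n => x (n + 1) := fun i j hij => by
    simp only [hrec]
    exact div_le_div_of_nonneg_right
      (logLogRate_monotoneOn hk (hse i) (hse j) (hsmono hij)) hC₄.le
  have hlin (n : ℕ) : n * x 1 ≤ s n := by
    have := add_mul_le_of_eq_sum_range hs hxmono 0 n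
    simp only [Nat.zero_add] at this
    linarith [(exp_pos 1).trans_le (hse 0)]
  filter_upwards [eventually_gt_atTop 0, eventually_sqrt_le_mul_half (hxpos 1),
    (tendsto_log_atTop.comp tendsto_natCast_atTop_atTop).eventually_ge_atTop 4]
    with n hn hsqrt hlog
  rw [Function.comp_apply] at hlog
  set m := n / 2
  have hn : (0 : ℝ) < n := by exact_mod_cast hn
  have hsqrt_ge : exp 1 ≤ √n :=
    (le_log_iff_exp_le (sqrt_pos.2 hn)).1 (by rw [log_sqrt hn.le]; linarith)
  have hhalf : (n : ℝ) / 2 ≤ (n - m : ℕ) := by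
    have : (n : ℝ) ≤ 2 * (n - m : ℕ) := by exact_mod_cast (by omega : n ≤ 2 * (n - m))
    linarith
  have htail := add_mul_le_of_eq_sum_range hs hxmono m (n - m)
  rw [Nat.add_sub_cancel' (Nat.div_le_self n 2)] at htail
  calc n * logLogRate k n ≤ n * (2 ^ k * logLogRate k (s m)) := by
        gcongr
        exact (logLogRate_le_two_rpow_mul_logLogRate_sqrt hk hn.le hlog).trans <|
          by gcongr; exact logLogRate_monotoneOn hk hsqrt_ge (hse m) (hsqrt.trans (hlin m))
    _ = 2 ^ (k + 1) * C₄ * (n / 2 * x (m + 1)) := by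
        rw [hrec, rpow_add_one two_ne_zero]
        field_simp
    _ ≤ 2 ^ (k + 1) * C₄ * s n := by
        gcongr
        linarith [mul_le_mul_of_nonneg_right hhalf (hxpos (m + 1)).le,
          (exp_pos 1).trans_le (hse m)]

theorem isBigO_mul_logLogRate_of_recurrence {C₄ k : ℝ} (hC₄ : 0 < C₄) (hk : 1 ≤ k)
    (hx0 : exp 1 ≤ x 0) (hxpos : ∀ n, 0 < x n) (hs : ∀ n, s n = ∑ j ∈ range (n + 1), x j)
    (hrec : ∀ n, x (n + 1) = logLogRate k (s n) / C₄) :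
    (fun n : ℕ => n * logLogRate k n) =O[atTop] s := by
  refine IsBigO.of_bound (2 ^ (k + 1) * C₄) ?_
  filter_upwards [eventually_mul_logLogRate_le_of_recurrence hC₄ hk hx0 hxpos hs hrec,
    tendsto_natCast_atTop_atTop.eventually_ge_atTop (exp 1)] with n hn hen
  have hspos : 0 ≤ s n := hs n ▸ sum_nonneg fun j _ => (hxpos j).le
  rwa [norm_of_nonneg (mul_nonneg n.cast_nonneg (logLogRate_nonneg hen)), norm_of_nonneg hspos]

end Recurrence

/-- Growth lower bound for the difference equation
`x_{n+1} = (log sₙ)(log log sₙ)^{k−1}/C₄`, `k > 1`: the partial sums satisfy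
`sₙ ≥ C n (log n)(log log n)^{k−1}`. -/
theorem stmt_7 (C₄ k : ℝ) (hC₄ : 0 < C₄) (hk : 1 < k)
    (x : ℕ → ℝ) (hx0 : Real.exp 1 < x 0) (hxpos : ∀ n, 0 < x n)
    (s : ℕ → ℝ) (hs : ∀ n, s n = ∑ j ∈ Finset.range (n + 1), x j)
    (hrec : ∀ n : ℕ, x (n + 1) = Real.log (s n) * (Real.log (Real.log (s n))) ^ (k - 1) / C₄) :
    ∃ C > 0, ∀ n : ℕ, 3 ≤ n →
      C * n * Real.log n * (Real.log (Real.log n)) ^ (k - 1) ≤ s n := by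
  have hspos (n : ℕ) : 0 < s n := hs n ▸ sum_pos (fun j _ => hxpos j) nonempty_range_add_one
  obtain ⟨C, hC, hCs⟩ :=
    exists_pos_mul_le_of_isBigO hspos (isBigO_mul_logLogRate_of_recurrence hC₄ hk.le hx0.le hxpos hs hrec)
  exact ⟨C, hC, fun n _ => by simpa only [logLogRate, mul_assoc] using hCs n⟩
end
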